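/- (Deterministic lower bound underlying Lemma 2.10, alternative case.) For every k > 0, m > 0, τ > 0, r ≥ 1 and f ≥ 0, the F Bayes factor satisfies BF₁₀(f|τ²,r) ≥ (1+τ²)^{−(k/2+r)} · exp( (k+m) k f τ² / (2 (m+kf)(1+τ²)) ). (Indeed (k/2+r)_i ≥ (k/2)_i and ((k+m)/2)_i ≥ ((k+m)/2)^i for all i, so the ₂F₁ series is bounded below term by term by the exponential series.) -/

import Mathlib

open Real MeasureTheory Filter

/-- Rising factorial (Pochhammer symbol) `(a)_k`. -/
noncomputable def risingFac (a : ℝ) (k : ℕ) : ℝ := (ascPochhammer ℝ k).eval a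

/-- Gaussian hypergeometric function `₂F₁(a, b, c; x)` (as a series). -/
noncomputable def twoF1 (a b c x : ℝ) : ℝ :=
  ∑' k : ℕ, (risingFac a k * risingFac b k / (risingFac c k * (Nat.factorial k : ℝ))) * x ^ k

/-- `F` Bayes factor `BF₁₀(f | τ², r)` with `(k, m)` degrees of freedom,
as a function of `τ² = τsq`. -/
noncomputable def BF10F (f τsq r k m : ℝ) : ℝ :=
  (1 + τsq) ^ (-(k / 2 + r)) *
    twoF1 (k / 2 + r) ((k + m) / 2) (k / 2) (k * f * τsq / ((1 + τsq) * (m + k * f)))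

/-!
Since `(a)_n ≥ (c)_n > 0` for `0 < c ≤ a` and `(b)_n ≥ bⁿ` for `b ≥ 0`, the `n`-th term
of `₂F₁(a, b, c; x)` dominates `(b x)ⁿ / n!` when `0 ≤ x`. For `x < 1` the hypergeometric
series converges (its radius of convergence is `1`), so summing gives
`exp (b x) ≤ ₂F₁(a, b, c; x)`; take `a = k/2 + r`, `b = (k+m)/2`, `c = k/2`.
-/

lemma risingFac_eq_prod (a : ℝ) (n : ℕ) : risingFac a n = ∏ i ∈ Finset.range n, (a + i) := by
  induction n with
  | zero => simp [risingFac]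
  | succ n ih =>
    rw [Finset.prod_range_succ, ← ih]
    simp [risingFac, ascPochhammer_succ_right]

lemma risingFac_pos {a : ℝ} (ha : 0 < a) (n : ℕ) : 0 < risingFac a n :=
  ascPochhammer_pos n a ha

lemma risingFac_le_risingFac {a c : ℝ} (hc : 0 ≤ c) (hca : c ≤ a) (n : ℕ) :
    risingFac c n ≤ risingFac a n := by
  simp only [risingFac_eq_prod]
  exact Finset.prod_le_prod (fun i _ ↦ by positivity) (fun i _ ↦ by linarith)

lemma pow_le_risingFac {b : ℝ} (hb : 0 ≤ b) (n : ℕ) : b ^ n ≤ risingFac b n := by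
  calc b ^ n = ∏ _i ∈ Finset.range n, b := by simp
    _ ≤ risingFac b n := by
      rw [risingFac_eq_prod]
      exact Finset.prod_le_prod (fun _ _ ↦ hb) (fun i _ ↦ by simp)

lemma summable_twoF1_term {a b c x : ℝ}
    (habc : ∀ n : ℕ, (n : ℝ) ≠ -a ∧ (n : ℝ) ≠ -b ∧ (n : ℝ) ≠ -c) (hx : |x| < 1) :
    Summable fun n : ℕ ↦
      risingFac a n * risingFac b n / (risingFac c n * (Nat.factorial n : ℝ)) * x ^ n := by
  have hx' : x ∈ Metric.eball (0 : ℝ) (ordinaryHypergeometricSeries ℝ a b c).radius := by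
    rw [ordinaryHypergeometricSeries_radius_eq_one ℝ a b c habc, mem_eball_zero_iff,
      ← ofReal_norm]
    exact ENNReal.ofReal_lt_one.mpr hx
  refine ((ordinaryHypergeometricSeries ℝ a b c).summable_norm_apply hx').of_norm.congr
    fun n ↦ ?_
  rw [ordinaryHypergeometricSeries_apply_eq, smul_eq_mul, risingFac, risingFac, risingFac]
  field_simp

lemma pow_div_factorial_le_twoF1_term {a b c x : ℝ} (hc : 0 < c) (hca : c ≤ a) (hb : 0 ≤ b)
    (hx : 0 ≤ x) (n : ℕ) :
    (b * x) ^ n / (Nat.factorial n : ℝ) ≤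
      risingFac a n * risingFac b n / (risingFac c n * (Nat.factorial n : ℝ)) * x ^ n := by
  have hcn := risingFac_pos hc n
  have hbn : 0 ≤ risingFac b n := (pow_nonneg hb n).trans (pow_le_risingFac hb n)
  calc (b * x) ^ n / (Nat.factorial n : ℝ)
        = b ^ n * x ^ n / (Nat.factorial n : ℝ) := by rw [mul_pow]
    _ ≤ risingFac b n * x ^ n / (Nat.factorial n : ℝ) := by
        gcongr; exact pow_le_risingFac hb n
    _ ≤ risingFac a n / risingFac c n * (risingFac b n * x ^ n / (Nat.factorial n : ℝ)) :=
        le_mul_of_one_le_left (by positivity)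
          ((one_le_div hcn).2 (risingFac_le_risingFac hc.le hca n))
    _ = _ := by field_simp

lemma exp_le_twoF1 {a b c x : ℝ} (hc : 0 < c) (hca : c ≤ a) (hb : 0 < b) (hx0 : 0 ≤ x)
    (hx1 : x < 1) : exp (b * x) ≤ twoF1 a b c x := by
  have habc : ∀ n : ℕ, (n : ℝ) ≠ -a ∧ (n : ℝ) ≠ -b ∧ (n : ℝ) ≠ -c := fun n ↦ by
    refine ⟨?_, ?_, ?_⟩ <;> linarith [(Nat.cast_nonneg n : (0 : ℝ) ≤ n)]
  have hexp : HasSum (fun n : ℕ ↦ (b * x) ^ n / (Nat.factorial n : ℝ)) (exp (b * x)) := by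
    rw [exp_eq_exp_ℝ]
    exact NormedSpace.expSeries_div_hasSum_exp (b * x)
  exact hasSum_le (pow_div_factorial_le_twoF1_term hc hca hb.le hx0) hexp
    (summable_twoF1_term habc (abs_lt.2 ⟨by linarith, hx1⟩)).hasSum

theorem lemma210_alternative_lower_bound_general (k m τ r f : ℝ) (hk : 0 < k) (hm : 0 < m)
    (hr : 1 ≤ r) (hf : 0 ≤ f) :
    (1 + τ ^ 2) ^ (-(k / 2 + r)) *
        Real.exp ((k + m) * k * f * τ ^ 2 / (2 * (m + k * f) * (1 + τ ^ 2)))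
      ≤ BF10F f (τ ^ 2) r k m := by
  set x := k * f * τ ^ 2 / ((1 + τ ^ 2) * (m + k * f)) with hx
  have hden : 0 < (1 + τ ^ 2) * (m + k * f) := by positivity
  have hx0 : 0 ≤ x := by positivity
  have hx1 : x < 1 := by
    rw [hx, div_lt_one hden]
    nlinarith [sq_nonneg τ, mul_nonneg hk.le hf]
  have harg :
      (k + m) * k * f * τ ^ 2 / (2 * (m + k * f) * (1 + τ ^ 2)) = (k + m) / 2 * x := by
    rw [hx]
    field_simp
  rw [BF10F, harg]
  gcongr
  exact exp_le_twoF1 (by positivity) (by linarith) (by positivity) hx0 hx1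

/-- Deterministic lower bound underlying Lemma 2.10, alternative case. -/
theorem lemma210_alternative_lower_bound (k m τ r f : ℝ) (hk : 0 < k) (hm : 0 < m)
    (hτ : 0 < τ) (hr : 1 ≤ r) (hf : 0 ≤ f) :
    (1 + τ ^ 2) ^ (-(k / 2 + r)) *
        Real.exp ((k + m) * k * f * τ ^ 2 / (2 * (m + k * f) * (1 + τ ^ 2)))
      ≤ BF10F f (τ ^ 2) r k m :=
  lemma210_alternative_lower_bound_general k m τ r f hk hm hr hf
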